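/- The map i : NSymm → (MPR, m', μ') determined by Sₙ ↦ [1,2,...,n] (identity permutation of length n) is an injective morphism of Hopf algebras. -/

import Mathlib

/-!
The image of `S_α` is the sum of the descent class of `α`: the permutations of `[1,…,|α|]` that
increase along the blocks of `α`. Multiplicativity holds because standardization preserves the
relative order inside each block, so the `m'`-product of two descent classes is the descent class of
the concatenation. For `μ'`, cutting such a permutation at the value `i` records how many letters of
each block lie below and above `i`; this gives a splitting `β + γ = α` and a pair from the descent
classes of `β` and `γ`, and interleaving blockwise glues such a pair back. So the terms of
`μ'(S_α)` and of `Σ S_β ⊗ S_γ` are in bijection. Injectivity is unitriangularity: the permutation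
with descents exactly at the partial sums of `α` lies in the descent class of `β` only if `β`
refines `α`, hence only if `β = α` or `β` has more parts.
-/

open Finsupp TensorProduct

/-- Standardization of an injective word: each letter is replaced by its rank. -/
def stdz (w : List ℕ) : List ℕ := w.map (fun a => w.countP (fun b => b ≤ a))

/-- The underlying free abelian group of `MPR`. -/
abbrev MPR : Type := List ℕ →₀ ℤ

/-- Second multiplication of `MPR`: `m'(σ⊗τ) = Σ u*v` over all pairs `(u,v)` with
`st(u) = σ`, `st(v) = τ` and `supp(u) ∪ supp(v) = {1,…,m+n}`. -/
noncomputable def mulMPR' (σ τ : List ℕ) : MPR :=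
  (((List.range' 1 (σ.length + τ.length)).permutations.filter
      (fun w => stdz (w.take σ.length) = σ ∧ stdz (w.drop σ.length) = τ)).map
    (fun w => Finsupp.single w (1 : ℤ))).sum

/-- Second comultiplication of `MPR`: `μ'(τ) = Σᵢ τ_{{1..i}} ⊗ st(τ_{{i+1..n}})`. -/
noncomputable def comulMPR' (τ : List ℕ) : MPR ⊗[ℤ] MPR :=
  ((List.range (τ.length + 1)).map (fun i =>
    Finsupp.single (τ.filter (fun a => a ≤ i)) (1 : ℤ) ⊗ₜ[ℤ]
      Finsupp.single (stdz (τ.filter (fun a => i < a))) (1 : ℤ))).sum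

/-- Bilinear extension of `m'` to the free abelian group `MPR`. -/
noncomputable def mulE (x y : MPR) : MPR :=
  x.sum fun σ c => y.sum fun τ d => (c * d) • mulMPR' σ τ

/-- Linear extension of `μ'` to `MPR`. -/
noncomputable def comulE : MPR →ₗ[ℤ] MPR ⊗[ℤ] MPR :=
  Finsupp.lsum ℤ (fun w => LinearMap.toSpanSingleton ℤ (MPR ⊗[ℤ] MPR) (comulMPR' w))

/-- The identity permutation word `[1,2,…,n]`. -/
def idPerm (n : ℕ) : List ℕ := List.range' 1 n

/-- The image of the monomial `S_α = S_{a₁} ⋯ S_{aₘ}` of `NSymm` in `(MPR, m')`: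
the `m'`-product of the identity permutations `[1,…,a₁], …, [1,…,aₘ]`. -/
noncomputable def SImg (α : List ℕ) : MPR :=
  α.foldl (fun acc a => mulE acc (Finsupp.single (idPerm a) 1)) (Finsupp.single [] 1)

/-- All splittings `(β,γ)` with `βᵢ + γᵢ = αᵢ`, encoding the `NSymm` coproduct
`μ(S_α) = Σ S_β ⊗ S_γ` (with `S₀ = 1`). -/
def splittings : List ℕ → List (List ℕ × List ℕ)
  | [] => [([], [])]
  | a :: α => (List.range (a + 1)).flatMap
      (fun i => (splittings α).map (fun p => (i :: p.1, (a - i) :: p.2)))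

theorem Finsupp.finsetSum_single_one_apply {ι : Type*} [DecidableEq ι] (s : Finset ι) (x : ι) :
    (∑ y ∈ s, Finsupp.single y (1 : ℤ)) x = if x ∈ s then 1 else 0 := by
  simp [Finsupp.finsetSum_apply, Finsupp.single_apply]

theorem Finsupp.listSum_map_single_one_apply {ι : Type*} [DecidableEq ι] {l : List ι}
    (hl : l.Nodup) (x : ι) :
    (l.map fun y => Finsupp.single y (1 : ℤ)).sum x = if x ∈ l then 1 else 0 := by
  rw [← List.sum_toFinset _ hl, Finsupp.finsetSum_single_one_apply]
  simp

theorem List.filter_perm_range' {w : List ℕ} {s n t m : ℕ} (hw : w.Perm (List.range' s n))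
    {p : ℕ → Bool} (hp : ∀ x, x ∈ List.range' s n ∧ p x ↔ x ∈ List.range' t m) :
    (w.filter p).Perm (List.range' t m) := by
  rw [List.perm_ext_iff_of_nodup ((hw.nodup_iff.2 List.nodup_range').filter p)
    List.nodup_range']
  intro x
  rw [List.mem_filter, hw.mem_iff, hp]

theorem List.Pairwise.eq_filter_append_filter_not {ι : Type*} {r : ι → ι → Prop} {l : List ι}
    (hl : l.Pairwise r) {p : ι → Bool} (hp : ∀ x y, r x y → p y = true → p x = true) :
    l = l.filter p ++ l.filter (fun b => !p b) := by
  induction l with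
  | nil => rfl
  | cons x l ih =>
    obtain ⟨hx, hl⟩ := List.pairwise_cons.1 hl
    by_cases hpx : p x = true
    · simpa [List.filter_cons, hpx] using ih hl
    · have hnp : ∀ y ∈ l, p y = false := fun y hy => by
        simpa using mt (hp x y (hx y hy)) hpx
      rw [List.filter_cons_of_neg hpx, List.filter_cons_of_pos (by simpa using hpx),
        List.filter_eq_nil_iff.2 fun y hy => by simp [hnp y hy],
        List.filter_eq_self.2 fun y hy => by simp [hnp y hy], List.nil_append]

section Standardization

def letterRank (u : List ℕ) (a : ℕ) : ℕ := u.countP (· ≤ a)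

theorem stdz_eq_map_letterRank (u : List ℕ) : stdz u = u.map (letterRank u) := rfl

theorem letterRank_mono (u : List ℕ) {a b : ℕ} (h : a ≤ b) : letterRank u a ≤ letterRank u b :=
  List.countP_mono_left fun x _ hx => by simp only [decide_eq_true_eq] at hx ⊢; omega

theorem letterRank_lt_letterRank {u : List ℕ} {a b : ℕ} (h : a < b) (hb : b ∈ u) :
    letterRank u a < letterRank u b := by
  induction u with
  | nil => cases hb
  | cons x u ih =>
    have hmono := letterRank_mono u h.le
    simp only [letterRank, List.countP_cons, decide_eq_true_eq] at hmono ih ⊢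
    rcases List.mem_cons.1 hb with rfl | hb
    · split_ifs <;> omega
    · have := ih hb
      split_ifs <;> omega

theorem letterRank_lt_letterRank_iff {u : List ℕ} {a b : ℕ} (hb : b ∈ u) :
    letterRank u a < letterRank u b ↔ a < b :=
  ⟨fun h => by_contra fun hab => (letterRank_mono u (not_lt.1 hab)).not_gt h,
    fun h => letterRank_lt_letterRank h hb⟩

theorem stdz_perm_range' {u : List ℕ} (hu : u.Nodup) : (stdz u).Perm (List.range' 1 u.length) := by
  have hinj : ∀ a ∈ u, ∀ b ∈ u, letterRank u a = letterRank u b → a = b := fun a ha b hb h => by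
    rcases lt_trichotomy a b with hab | rfl | hab
    · exact absurd h (letterRank_lt_letterRank hab hb).ne
    · rfl
    · exact absurd h (letterRank_lt_letterRank hab ha).ne'
  have hsub : stdz u ⊆ List.range' 1 u.length := by
    intro m hm
    rw [stdz_eq_map_letterRank] at hm
    obtain ⟨a, ha, rfl⟩ := List.mem_map.1 hm
    have hpos : 0 < letterRank u a := List.countP_pos_iff.2 ⟨a, ha, by simp⟩
    have hle : letterRank u a ≤ u.length := List.countP_le_length
    rw [List.mem_range'_1]
    omega
  exact (List.subperm_of_subset (hu.map_on hinj) hsub).perm_of_length_le (by simp)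

theorem stdz_of_perm_range' {v : List ℕ} {k m : ℕ} (h : v.Perm (List.range' (k + 1) m)) :
    stdz v = v.map (· - k) := by
  rw [stdz_eq_map_letterRank]
  refine List.map_congr_left fun a ha => ?_
  have hrange := List.mem_range'_1.1 (h.mem_iff.1 ha)
  have hfilter : (v.filter (· ≤ a)).Perm (List.range' (k + 1) (a - k)) :=
    List.filter_perm_range' h fun x => by simp only [List.mem_range'_1, decide_eq_true_eq]; omega
  rw [letterRank, List.countP_eq_length_filter, hfilter.length_eq, List.length_range']

end Standardization

section BlockIncreasing

def BlockIncreasing : List ℕ → List ℕ → Prop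
  | [], _ => True
  | a :: α, w => (w.take a).Pairwise (· < ·) ∧ BlockIncreasing α (w.drop a)

instance instDecidableBlockIncreasing : ∀ α w, Decidable (BlockIncreasing α w)
  | [], _ => .isTrue trivial
  | a :: α, w =>
    haveI := instDecidableBlockIncreasing α (w.drop a)
    inferInstanceAs (Decidable (_ ∧ _))

theorem blockIncreasing_cons (a : ℕ) (α w : List ℕ) :
    BlockIncreasing (a :: α) w ↔ (w.take a).Pairwise (· < ·) ∧ BlockIncreasing α (w.drop a) :=
  Iff.rfl

theorem blockIncreasing_append (α β w : List ℕ) :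
    BlockIncreasing (α ++ β) w ↔
      BlockIncreasing α (w.take α.sum) ∧ BlockIncreasing β (w.drop α.sum) := by
  induction α generalizing w with
  | nil => simp [BlockIncreasing]
  | cons a α ih =>
    simp only [List.cons_append, blockIncreasing_cons, ih, List.sum_cons, List.take_take,
      min_eq_left (Nat.le_add_right a α.sum), List.drop_take, Nat.add_sub_cancel_left,
      List.drop_drop, and_assoc]

theorem blockIncreasing_map_iff {f : ℕ → ℕ} {u : List ℕ}
    (hf : ∀ a ∈ u, ∀ b ∈ u, f a < f b ↔ a < b) (α : List ℕ) :
    BlockIncreasing α (u.map f) ↔ BlockIncreasing α u := by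
  induction α generalizing u with
  | nil => exact Iff.rfl
  | cons a α ih =>
    rw [blockIncreasing_cons, blockIncreasing_cons, ← List.map_take, ← List.map_drop,
      List.pairwise_map, ih fun x hx y hy => hf x (List.mem_of_mem_drop hx) y
        (List.mem_of_mem_drop hy)]
    exact and_congr_left' <| List.Pairwise.iff_of_mem fun hx hy =>
      hf _ (List.mem_of_mem_take hx) _ (List.mem_of_mem_take hy)

theorem blockIncreasing_stdz_iff (α u : List ℕ) :
    BlockIncreasing α (stdz u) ↔ BlockIncreasing α u :=
  blockIncreasing_map_iff (fun _ _ _ hb => letterRank_lt_letterRank_iff hb) α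

end BlockIncreasing

/-- The descent class of `α`: permutations whose descents all sit at partial sums of `α`. -/
def blockPerms (α : List ℕ) : Finset (List ℕ) :=
  (List.range' 1 α.sum).permutations.toFinset.filter (BlockIncreasing α)

theorem mem_blockPerms {α w : List ℕ} :
    w ∈ blockPerms α ↔ w.Perm (List.range' 1 α.sum) ∧ BlockIncreasing α w := by
  simp [blockPerms]

theorem length_of_mem_blockPerms {α w : List ℕ} (h : w ∈ blockPerms α) : w.length = α.sum := by
  rw [(mem_blockPerms.1 h).1.length_eq, List.length_range']

theorem blockPerms_nil : blockPerms [] = {[]} := by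
  ext w
  simp [mem_blockPerms, BlockIncreasing]

theorem blockPerms_singleton (a : ℕ) : blockPerms [a] = {idPerm a} := by
  ext w
  rw [mem_blockPerms, blockIncreasing_cons, Finset.mem_singleton, idPerm, List.sum_singleton]
  constructor
  · rintro ⟨hw, hinc, -⟩
    rw [List.take_of_length_le (by rw [hw.length_eq, List.length_range'])] at hinc
    exact hw.eq_of_pairwise (fun _ _ _ _ h h' => absurd h (lt_asymm h')) hinc
      List.pairwise_lt_range'
  · rintro rfl
    exact ⟨List.Perm.refl _, List.Pairwise.sublist (List.take_sublist _ _) List.pairwise_lt_range',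
      trivial⟩

theorem mem_blockPerms_append {α β w : List ℕ} :
    w ∈ blockPerms (α ++ β) ↔ w.Perm (List.range' 1 (α.sum + β.sum)) ∧
      stdz (w.take α.sum) ∈ blockPerms α ∧ stdz (w.drop α.sum) ∈ blockPerms β := by
  simp only [mem_blockPerms, List.sum_append, blockIncreasing_append, blockIncreasing_stdz_iff]
  refine ⟨fun ⟨hw, hα, hβ⟩ => ⟨hw, ⟨?_, hα⟩, ⟨?_, hβ⟩⟩, fun ⟨hw, ⟨_, hα⟩, ⟨_, hβ⟩⟩ => ⟨hw, hα, hβ⟩⟩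
  all_goals
    have hnodup := hw.nodup_iff.2 List.nodup_range'
    have hlen : w.length = α.sum + β.sum := by rw [hw.length_eq, List.length_range']
  · have := stdz_perm_range' ((List.take_sublist α.sum w).nodup hnodup)
    rwa [List.length_take, hlen, min_eq_left (Nat.le_add_right _ _)] at this
  · have := stdz_perm_range' ((List.drop_sublist α.sum w).nodup hnodup)
    rwa [List.length_drop, hlen, Nat.add_sub_cancel_left] at this

section Multiplication

theorem mulMPR'_apply (σ τ w : List ℕ) :
    mulMPR' σ τ w = if w.Perm (List.range' 1 (σ.length + τ.length)) ∧
      stdz (w.take σ.length) = σ ∧ stdz (w.drop σ.length) = τ then 1 else 0 := by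
  rw [mulMPR', Finsupp.listSum_map_single_one_apply
    ((List.nodup_permutations _ List.nodup_range').filter _)]
  simp [List.mem_permutations]

theorem mulE_sum_single_sum_single (S T : Finset (List ℕ)) :
    mulE (∑ σ ∈ S, single σ 1) (∑ τ ∈ T, single τ 1) = ∑ σ ∈ S, ∑ τ ∈ T, mulMPR' σ τ := by
  rw [mulE, ← Finsupp.sum_finsetSum_index (by simp) fun _ _ _ => by
    simp only [add_mul, add_smul, Finsupp.sum_add]]
  refine Finset.sum_congr rfl fun σ _ => ?_
  rw [Finsupp.sum_single_index (by simp), ← Finsupp.sum_finsetSum_index (by simp)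
    fun _ _ _ => by rw [mul_add, add_smul]]
  simp

theorem mulE_sum_blockPerms (α β : List ℕ) :
    mulE (∑ σ ∈ blockPerms α, single σ 1) (∑ τ ∈ blockPerms β, single τ 1) =
      ∑ w ∈ blockPerms (α ++ β), single w 1 := by
  ext w
  rw [mulE_sum_single_sum_single, Finsupp.finsetSum_single_one_apply, Finsupp.finsetSum_apply]
  simp only [mem_blockPerms_append]
  have hcoeff : ∀ σ ∈ blockPerms α, (∑ τ ∈ blockPerms β, mulMPR' σ τ) w =
      if w.Perm (List.range' 1 (α.sum + β.sum)) ∧ stdz (w.take α.sum) = σ ∧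
        stdz (w.drop α.sum) ∈ blockPerms β then 1 else 0 := fun σ hσ => by
    rw [Finsupp.finsetSum_apply, Finset.sum_congr rfl fun τ hτ => by
      rw [mulMPR'_apply, length_of_mem_blockPerms hσ, length_of_mem_blockPerms hτ]]
    simp only [ite_and, Finset.sum_ite_irrel, Finset.sum_const_zero, Finset.sum_ite_eq]
  rw [Finset.sum_congr rfl hcoeff]
  simp only [ite_and, Finset.sum_ite_irrel, Finset.sum_const_zero, Finset.sum_ite_eq]

theorem SImg_eq_sum_blockPerms (α : List ℕ) : SImg α = ∑ w ∈ blockPerms α, single w 1 := by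
  induction α using List.reverseRecOn with
  | nil => rw [blockPerms_nil, Finset.sum_singleton]; rfl
  | append_singleton α a ih =>
    rw [SImg, List.foldl_append, ← SImg, List.foldl_cons, List.foldl_nil, ih,
      ← mulE_sum_blockPerms, blockPerms_singleton, Finset.sum_singleton]

theorem SImg_append (α β : List ℕ) : SImg (α ++ β) = mulE (SImg α) (SImg β) := by
  simp only [SImg_eq_sum_blockPerms, mulE_sum_blockPerms]

end Multiplication

theorem SImg_apply (α w : List ℕ) : SImg α w = if w ∈ blockPerms α then 1 else 0 := by
  rw [SImg_eq_sum_blockPerms, Finsupp.finsetSum_single_one_apply]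

section Injectivity

theorem linearIndependent_of_unitriangular {ι X R β : Type*} [Ring R] [LinearOrder β]
    (v : ι → X →₀ R) (f : ι → β) (x : ι → X) (hdiag : ∀ i, v i (x i) = 1)
    (htri : ∀ i j, v j (x i) ≠ 0 → j = i ∨ f i < f j) : LinearIndependent R v := by
  rw [linearIndependent_iff]
  intro l hl
  by_contra hne
  obtain ⟨i, hi, hmax⟩ := l.support.exists_max_image f (Finsupp.support_nonempty_iff.2 hne)
  have hvanish : ∀ j ∈ l.support, j ≠ i → l j • v j (x i) = 0 := fun j hj hji => by
    rcases eq_or_ne (v j (x i)) 0 with h | h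
    · rw [h, smul_zero]
    · exact ((htri i j h).resolve_left hji).not_ge (hmax j hj) |>.elim
  have hcoeff : Finsupp.linearCombination R v l (x i) = l i := by
    simp only [Finsupp.linearCombination_apply, Finsupp.sum, Finsupp.finsetSum_apply,
      Finsupp.smul_apply]
    rw [Finset.sum_eq_single_of_mem i hi hvanish, hdiag, smul_eq_mul, mul_one]
  rw [hl, Finsupp.coe_zero, Pi.zero_apply] at hcoeff
  exact Finsupp.mem_support_iff.1 hi hcoeff.symm

/-- Its descents sit exactly at the partial sums of `α`. -/
def blockDescWord : List ℕ → List ℕ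
  | [] => []
  | a :: α => List.range' (α.sum + 1) a ++ blockDescWord α

theorem blockDescWord_mem_blockPerms (α : List ℕ) : blockDescWord α ∈ blockPerms α := by
  induction α with
  | nil => simp [blockPerms_nil, blockDescWord]
  | cons a α ih =>
    obtain ⟨hperm, hinc⟩ := mem_blockPerms.1 ih
    refine mem_blockPerms.2 ⟨?_, ?_⟩
    · rw [blockDescWord, List.sum_cons, add_comm a, ← List.range'_append, one_mul, add_comm 1]
      exact (hperm.append_left _).trans List.perm_append_comm
    · rw [blockDescWord, blockIncreasing_cons, List.take_left' List.length_range',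
        List.drop_left' List.length_range']
      exact ⟨List.pairwise_lt_range', hinc⟩

theorem List.eq_nil_of_forall_pos_of_sum_eq_zero {β : List ℕ} (hβ : ∀ b ∈ β, 0 < b)
    (h : β.sum = 0) : β = [] :=
  List.eq_nil_iff_forall_not_mem.2 fun b hb => (hβ b hb).ne' (List.sum_eq_zero_iff.1 h b hb)

theorem le_length_of_pairwise_take_append_blockDescWord {run α : List ℕ} {b : ℕ}
    (hα : ∀ a ∈ α, 0 < a) (hne : run ≠ []) (hgt : ∀ x ∈ run, α.sum < x)
    (hb : b ≤ run.length + α.sum) (hinc : ((run ++ blockDescWord α).take b).Pairwise (· < ·)) :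
    b ≤ run.length := by
  by_contra hlt
  cases α with
  | nil => simp only [List.sum_nil] at hb; omega
  | cons a α =>
    obtain ⟨a, rfl⟩ := Nat.exists_eq_add_one.2 (hα _ List.mem_cons_self)
    obtain ⟨k, hk⟩ := Nat.exists_eq_add_one.2 (Nat.sub_pos_of_lt (not_le.1 hlt))
    rw [List.take_append, List.take_of_length_le (by omega), hk, blockDescWord,
      List.range'_succ, List.cons_append, List.take_succ_cons] at hinc
    obtain ⟨x, hx⟩ := List.exists_mem_of_ne_nil run hne
    have := (List.pairwise_append.1 hinc).2.2 x hx _ List.mem_cons_self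
    have := hgt x hx
    simp only [List.sum_cons] at this
    omega

/-- The general form, in which the first block of `blockDescWord` may be cut short to `run`,
is what makes the induction on `β` go through. -/
theorem eq_or_length_lt_of_blockIncreasing_append {β run α : List ℕ}
    (hβ : ∀ b ∈ β, 0 < b) (hα : ∀ a ∈ α, 0 < a) (hrun : run.Pairwise (· < ·)) (hne : run ≠ [])
    (hgt : ∀ x ∈ run, α.sum < x) (hsum : β.sum = run.length + α.sum)
    (hinc : BlockIncreasing β (run ++ blockDescWord α)) :
    β = run.length :: α ∨ α.length + 1 < β.length := by
  induction β generalizing run α with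
  | nil =>
    have := List.length_pos_iff.2 hne
    simp only [List.sum_nil] at hsum
    omega
  | cons b β ih =>
    obtain ⟨hhead, htail⟩ := (blockIncreasing_cons _ _ _).1 hinc
    have hβ' : ∀ c ∈ β, 0 < c := fun c hc => hβ c (List.mem_cons_of_mem _ hc)
    rw [List.sum_cons] at hsum
    rcases (le_length_of_pairwise_take_append_blockDescWord hα hne hgt (by omega) hhead).lt_or_eq
      with hlt | rfl
    · rw [List.drop_append_of_le_length hlt.le] at htail
      have := ih hβ' hα (hrun.sublist (List.drop_sublist _ _))
        (by simpa [List.length_pos_iff] using hlt) (fun x hx => hgt x (List.mem_of_mem_drop hx))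
        (by rw [List.length_drop]; omega) htail
      right
      rcases this with rfl | h <;> simp_all
      omega
    · rw [List.drop_left' rfl] at htail
      cases α with
      | nil => simp [List.eq_nil_of_forall_pos_of_sum_eq_zero hβ' (by simpa using hsum)]
      | cons a α =>
        have ha : 0 < a := hα a List.mem_cons_self
        have := ih hβ' (fun c hc => hα c (List.mem_cons_of_mem _ hc)) List.pairwise_lt_range'
          (by simpa using ha.ne') (fun x hx => by rw [List.mem_range'_1] at hx; omega)
          (by simp only [List.sum_cons] at hsum; simp; omega) htail
        simpa using this

theorem eq_or_length_lt_of_blockDescWord_mem {α β : List ℕ} (hα : ∀ a ∈ α, 0 < a)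
    (hβ : ∀ b ∈ β, 0 < b) (hmem : blockDescWord α ∈ blockPerms β) :
    β = α ∨ α.length < β.length := by
  obtain ⟨hperm, hinc⟩ := mem_blockPerms.1 hmem
  have hsum : β.sum = α.sum := by
    rw [← List.length_range' (s := 1) (n := β.sum), ← hperm.length_eq,
      length_of_mem_blockPerms (blockDescWord_mem_blockPerms α)]
  cases α with
  | nil => exact .inl (List.eq_nil_of_forall_pos_of_sum_eq_zero hβ hsum)
  | cons a α =>
    have ha : 0 < a := hα a List.mem_cons_self
    have := eq_or_length_lt_of_blockIncreasing_append hβ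
      (fun c hc => hα c (List.mem_cons_of_mem _ hc)) List.pairwise_lt_range'
      (by simpa using ha.ne') (fun x hx => by rw [List.mem_range'_1] at hx; omega)
      (by simp [hsum]) hinc
    simpa using this

theorem linearIndependent_SImg :
    LinearIndependent ℤ fun α : {w : List ℕ // ∀ a ∈ w, 0 < a} => SImg α.val := by
  refine linearIndependent_of_unitriangular _ (fun α => α.val.length)
    (fun α => blockDescWord α.val)
    (fun α => by rw [SImg_apply, if_pos (blockDescWord_mem_blockPerms _)]) fun α β h => ?_
  rw [SImg_apply, ne_eq, ite_eq_right_iff, not_forall] at h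
  obtain ⟨hmem, -⟩ := h
  simpa [Subtype.ext_iff] using eq_or_length_lt_of_blockDescWord_mem α.prop β.prop hmem

end Injectivity

section Splittings

theorem mem_splittings_nil {β γ : List ℕ} : (β, γ) ∈ splittings [] ↔ β = [] ∧ γ = [] := by
  simp [splittings]

theorem mem_splittings_cons {a : ℕ} {α β γ : List ℕ} :
    (β, γ) ∈ splittings (a :: α) ↔ ∃ b c β' γ', β = b :: β' ∧ γ = c :: γ' ∧ b + c = a ∧
      (β', γ') ∈ splittings α := by
  simp only [splittings, List.mem_flatMap, List.mem_range, List.mem_map, Prod.mk.injEq]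
  constructor
  · rintro ⟨k, hk, ⟨β', γ'⟩, hs, rfl, rfl⟩
    exact ⟨k, a - k, β', γ', rfl, rfl, by omega, hs⟩
  · rintro ⟨b, c, β', γ', rfl, rfl, rfl, hs⟩
    exact ⟨b, by omega, ⟨β', γ'⟩, hs, rfl, by simp⟩

theorem sum_add_sum_of_mem_splittings {α β γ : List ℕ} (h : (β, γ) ∈ splittings α) :
    β.sum + γ.sum = α.sum := by
  induction α generalizing β γ with
  | nil => obtain ⟨rfl, rfl⟩ := mem_splittings_nil.1 h; rfl
  | cons a α ih =>
    obtain ⟨b, c, β, γ, rfl, rfl, rfl, hs⟩ := mem_splittings_cons.1 h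
    simp only [List.sum_cons, ← ih hs]
    omega

theorem nodup_splittings (α : List ℕ) : (splittings α).Nodup := by
  induction α with
  | nil => simp [splittings]
  | cons a α ih =>
    refine List.nodup_flatMap.2 ⟨fun _ _ => ih.map fun p q h => ?_, ?_⟩
    · simp only [Prod.mk.injEq, List.cons.injEq, true_and] at h
      exact Prod.ext h.1 h.2
    · refine List.nodup_range.pairwise_of_forall_ne fun i _ j _ hij p hp hq => hij ?_
      simp only [List.mem_map] at hp hq
      obtain ⟨_, _, rfl⟩ := hp
      obtain ⟨_, _, h⟩ := hq
      exact (List.cons.inj (Prod.mk.inj h).1).1.symm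

end Splittings

section BlockCounts

def blockCounts (p : ℕ → Bool) : List ℕ → List ℕ → List ℕ
  | [], _ => []
  | a :: α, w => (w.take a).countP p :: blockCounts p α (w.drop a)

theorem sum_blockCounts (p : ℕ → Bool) {α w : List ℕ} (h : w.length = α.sum) :
    (blockCounts p α w).sum = w.countP p := by
  induction α generalizing w with
  | nil => simp_all [blockCounts]
  | cons a α ih =>
    rw [blockCounts, List.sum_cons, ih (by simp only [List.length_drop, h, List.sum_cons]; omega),
      ← List.countP_append, List.take_append_drop]

theorem blockCounts_mem_splittings (p : ℕ → Bool) {α w : List ℕ} (h : w.length = α.sum) :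
    (blockCounts p α w, blockCounts (fun b => !p b) α w) ∈ splittings α := by
  induction α generalizing w with
  | nil => simp [blockCounts, splittings]
  | cons a α ih =>
    simp only [List.sum_cons] at h
    refine mem_splittings_cons.2 ⟨_, _, _, _, rfl, rfl, ?_,
      ih (by simp only [List.length_drop, h]; omega)⟩
    have hsplit := List.length_eq_countP_add_countP p (l := w.take a)
    have hneg : (fun x => decide ¬p x = true) = fun x => !p x := by
      funext x
      simp
    rw [hneg, List.length_take, min_eq_left (by omega)] at hsplit
    omega

theorem blockIncreasing_filter (p : ℕ → Bool) {α w : List ℕ} (h : BlockIncreasing α w) :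
    BlockIncreasing (blockCounts p α w) (w.filter p) := by
  induction α generalizing w with
  | nil => trivial
  | cons a α ih =>
    obtain ⟨hhead, htail⟩ := (blockIncreasing_cons _ _ _).1 h
    have hlen : ((w.take a).filter p).length = (w.take a).countP p :=
      List.countP_eq_length_filter.symm
    have hw : w.filter p = (w.take a).filter p ++ (w.drop a).filter p := by
      rw [← List.filter_append, List.take_append_drop]
    rw [blockCounts, blockIncreasing_cons, hw, List.take_left' hlen, List.drop_left' hlen]
    exact ⟨hhead.sublist List.filter_sublist, ih htail⟩

end BlockCounts

section BlockInterleave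

def blockInterleave : List ℕ → List ℕ → List ℕ → List ℕ → List ℕ
  | b :: β, c :: γ, u, v => u.take b ++ v.take c ++ blockInterleave β γ (u.drop b) (v.drop c)
  | _, _, _, _ => []

variable {α β γ u v : List ℕ}

theorem perm_blockInterleave (hs : (β, γ) ∈ splittings α) (hu : u.length = β.sum)
    (hv : v.length = γ.sum) : (blockInterleave β γ u v).Perm (u ++ v) := by
  induction α generalizing β γ u v with
  | nil =>
    obtain ⟨rfl, rfl⟩ := mem_splittings_nil.1 hs
    simp_all [blockInterleave]
  | cons a α ih =>
    obtain ⟨b, c, β, γ, rfl, rfl, -, hs'⟩ := mem_splittings_cons.1 hs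
    simp only [List.sum_cons] at hu hv
    refine ((ih hs' (by simp [hu]) (by simp [hv])).append_left _).trans ?_
    rw [List.perm_iff_count]
    intro x
    conv_rhs => rw [← List.take_append_drop b u, ← List.take_append_drop c v]
    simp only [List.count_append]
    omega

theorem blockIncreasing_blockInterleave (hs : (β, γ) ∈ splittings α) (hu : u.length = β.sum)
    (hv : v.length = γ.sum) (hincu : BlockIncreasing β u) (hincv : BlockIncreasing γ v)
    (hlt : ∀ x ∈ u, ∀ y ∈ v, x < y) : BlockIncreasing α (blockInterleave β γ u v) := by
  induction α generalizing β γ u v with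
  | nil => trivial
  | cons a α ih =>
    obtain ⟨b, c, β, γ, rfl, rfl, rfl, hs'⟩ := mem_splittings_cons.1 hs
    obtain ⟨hincu, hincu'⟩ := (blockIncreasing_cons _ _ _).1 hincu
    obtain ⟨hincv, hincv'⟩ := (blockIncreasing_cons _ _ _).1 hincv
    simp only [List.sum_cons] at hu hv
    have hlen : (u.take b ++ v.take c).length = b + c := by simp; omega
    rw [blockInterleave, blockIncreasing_cons, List.take_left' hlen, List.drop_left' hlen]
    refine ⟨List.pairwise_append.2 ⟨hincu, hincv, fun x hx y hy =>
      hlt x (List.mem_of_mem_take hx) y (List.mem_of_mem_take hy)⟩,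
      ih hs' (by simp [hu]) (by simp [hv]) hincu' hincv' fun x hx y hy =>
        hlt x (List.mem_of_mem_drop hx) y (List.mem_of_mem_drop hy)⟩

theorem filter_blockInterleave_of_right (p : ℕ → Bool) (hs : (β, γ) ∈ splittings α)
    (hu : u.length = β.sum) (hv : v.length = γ.sum) (hpv : ∀ y ∈ v, p y = false) :
    (blockInterleave β γ u v).filter p = u.filter p := by
  induction α generalizing β γ u v with
  | nil =>
    obtain ⟨rfl, rfl⟩ := mem_splittings_nil.1 hs
    simp_all [blockInterleave]
  | cons a α ih =>
    obtain ⟨b, c, β, γ, rfl, rfl, -, hs'⟩ := mem_splittings_cons.1 hs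
    simp only [List.sum_cons] at hu hv
    rw [blockInterleave, List.filter_append, List.filter_append,
      List.filter_eq_nil_iff (l := v.take c).2 fun y hy => by
        simp [hpv y (List.mem_of_mem_take hy)],
      ih hs' (by simp [hu]) (by simp [hv]) fun y hy => hpv y (List.mem_of_mem_drop hy),
      List.append_nil, ← List.filter_append, List.take_append_drop]

theorem filter_blockInterleave_of_left (p : ℕ → Bool) (hs : (β, γ) ∈ splittings α)
    (hu : u.length = β.sum) (hv : v.length = γ.sum) (hpu : ∀ x ∈ u, p x = false) :
    (blockInterleave β γ u v).filter p = v.filter p := by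
  induction α generalizing β γ u v with
  | nil =>
    obtain ⟨rfl, rfl⟩ := mem_splittings_nil.1 hs
    simp_all [blockInterleave]
  | cons a α ih =>
    obtain ⟨b, c, β, γ, rfl, rfl, -, hs'⟩ := mem_splittings_cons.1 hs
    simp only [List.sum_cons] at hu hv
    rw [blockInterleave, List.filter_append, List.filter_append,
      List.filter_eq_nil_iff (l := u.take b).2 fun x hx => by
        simp [hpu x (List.mem_of_mem_take hx)],
      ih hs' (by simp [hu]) (by simp [hv]) fun x hx => hpu x (List.mem_of_mem_drop hx),
      List.nil_append, ← List.filter_append, List.take_append_drop]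

theorem blockCounts_blockInterleave (p : ℕ → Bool) (hs : (β, γ) ∈ splittings α)
    (hu : u.length = β.sum) (hv : v.length = γ.sum) (hpu : ∀ x ∈ u, p x = true)
    (hpv : ∀ y ∈ v, p y = false) :
    blockCounts p α (blockInterleave β γ u v) = β ∧
      blockCounts (fun b => !p b) α (blockInterleave β γ u v) = γ := by
  induction α generalizing β γ u v with
  | nil =>
    obtain ⟨rfl, rfl⟩ := mem_splittings_nil.1 hs
    simp [blockCounts]
  | cons a α ih =>
    obtain ⟨b, c, β, γ, rfl, rfl, rfl, hs'⟩ := mem_splittings_cons.1 hs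
    simp only [List.sum_cons] at hu hv
    have hlen : (u.take b ++ v.take c).length = b + c := by simp; omega
    have hub : ∀ x ∈ u.take b, p x = true := fun x hx => hpu x (List.mem_of_mem_take hx)
    have hvc : ∀ y ∈ v.take c, p y = false := fun y hy => hpv y (List.mem_of_mem_take hy)
    obtain ⟨ihβ, ihγ⟩ := ih (u := u.drop b) (v := v.drop c) hs' (by simp [hu]) (by simp [hv])
      (fun x hx => hpu x (List.mem_of_mem_drop hx)) fun y hy => hpv y (List.mem_of_mem_drop hy)
    have hcu : (u.take b).countP p = b := by
      rw [List.countP_eq_length.2 hub, List.length_take]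
      omega
    have hcv : (v.take c).countP p = 0 := List.countP_eq_zero.2 fun y hy => by simp [hvc y hy]
    have hcu' : (u.take b).countP (fun x => !p x) = 0 :=
      List.countP_eq_zero.2 fun x hx => by simp [hub x hx]
    have hcv' : (v.take c).countP (fun x => !p x) = c := by
      rw [List.countP_eq_length.2 fun y hy => by simp [hvc y hy], List.length_take]
      omega
    rw [blockInterleave, blockCounts, blockCounts, List.take_left' hlen, List.drop_left' hlen,
      List.countP_append, List.countP_append, hcu, hcv, hcu', hcv', ihβ, ihγ]
    simp

theorem blockInterleave_blockCounts {p : ℕ → Bool} (hp : ∀ x y, x < y → p y = true → p x = true)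
    {w : List ℕ} (hinc : BlockIncreasing α w) (hlen : w.length = α.sum) :
    blockInterleave (blockCounts p α w) (blockCounts (fun b => !p b) α w) (w.filter p)
      (w.filter fun b => !p b) = w := by
  induction α generalizing w with
  | nil => simp_all [blockCounts, blockInterleave]
  | cons a α ih =>
    obtain ⟨hhead, htail⟩ := (blockIncreasing_cons _ _ _).1 hinc
    simp only [List.sum_cons] at hlen
    have hw : ∀ q : ℕ → Bool, w.filter q = (w.take a).filter q ++ (w.drop a).filter q := fun q => by
      rw [← List.filter_append, List.take_append_drop]
    have hcount : ∀ q : ℕ → Bool, ((w.take a).filter q).length = (w.take a).countP q := fun q =>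
      List.countP_eq_length_filter.symm
    rw [blockCounts, blockCounts, blockInterleave, hw, hw, List.take_left' (hcount _),
      List.drop_left' (hcount _), List.take_left' (hcount _), List.drop_left' (hcount _),
      ← hhead.eq_filter_append_filter_not hp, ih htail (by simp [hlen]), List.take_append_drop]

end BlockInterleave

section Comultiplication

theorem filter_le_perm_range' {w : List ℕ} {n i : ℕ} (hw : w.Perm (List.range' 1 n))
    (hi : i ≤ n) : (w.filter (· ≤ i)).Perm (List.range' 1 i) :=
  List.filter_perm_range' hw fun x => by simp only [List.mem_range'_1, decide_eq_true_eq]; omega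

theorem filter_not_le_perm_range' {w : List ℕ} {n i : ℕ} (hw : w.Perm (List.range' 1 n)) :
    (w.filter fun b => !decide (b ≤ i)).Perm (List.range' (i + 1) (n - i)) :=
  List.filter_perm_range' hw fun x => by
    simp only [List.mem_range'_1, Bool.not_eq_true', decide_eq_false_iff_not]; omega

theorem stdz_filter_mem_blockPerms {α w : List ℕ} (hw : w ∈ blockPerms α) (p : ℕ → Bool) :
    stdz (w.filter p) ∈ blockPerms (blockCounts p α w) := by
  obtain ⟨hperm, hinc⟩ := mem_blockPerms.1 hw
  refine mem_blockPerms.2 ⟨?_, (blockIncreasing_stdz_iff _ _).2 (blockIncreasing_filter p hinc)⟩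
  rw [sum_blockCounts p (length_of_mem_blockPerms hw), List.countP_eq_length_filter]
  exact stdz_perm_range' ((hperm.nodup_iff.2 List.nodup_range').filter p)

theorem map_add_perm_range' {γ v : List ℕ} (hv : v ∈ blockPerms γ) (s : ℕ) :
    (v.map (s + ·)).Perm (List.range' (s + 1) γ.sum) := by
  simpa [List.map_add_range'] using (mem_blockPerms.1 hv).1.map (s + ·)

/-- For `x = (w, i)`: the splitting of `α` induced by cutting the values of `w` at `i`, and the
term `w_{{1..i}} ⊗ st(w_{{i+1..n}})` of `μ'(w)`. -/
def cutAt (α : List ℕ) (x : List ℕ × ℕ) : (_ : List ℕ × List ℕ) × (List ℕ × List ℕ) :=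
  ⟨(blockCounts (· ≤ x.2) α x.1, blockCounts (fun b => !decide (b ≤ x.2)) α x.1),
    (x.1.filter (· ≤ x.2), stdz (x.1.filter fun b => !decide (b ≤ x.2)))⟩

def glue (y : (_ : List ℕ × List ℕ) × (List ℕ × List ℕ)) : List ℕ × ℕ :=
  (blockInterleave y.1.1 y.1.2 y.2.1 (y.2.2.map (y.1.1.sum + ·)), y.1.1.sum)

def splitBlockPerms (α : List ℕ) : Finset ((_ : List ℕ × List ℕ) × (List ℕ × List ℕ)) :=
  (splittings α).toFinset.sigma fun p => blockPerms p.1 ×ˢ blockPerms p.2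

variable {α : List ℕ}

theorem cutAt_mem {x : List ℕ × ℕ} (hx : x ∈ blockPerms α ×ˢ Finset.range (α.sum + 1)) :
    cutAt α x ∈ splitBlockPerms α := by
  obtain ⟨w, i⟩ := x
  simp only [Finset.mem_product, Finset.mem_range] at hx
  obtain ⟨hw, hi⟩ := hx
  have hlow : stdz (w.filter (· ≤ i)) = w.filter (· ≤ i) := by
    rw [stdz_of_perm_range' (k := 0)
      (filter_le_perm_range' (mem_blockPerms.1 hw).1 (Nat.lt_succ_iff.1 hi))]
    simp
  simp only [splitBlockPerms, cutAt, Finset.mem_sigma, List.mem_toFinset, Finset.mem_product]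
  refine ⟨blockCounts_mem_splittings _ (length_of_mem_blockPerms hw), ?_,
    stdz_filter_mem_blockPerms hw _⟩
  rw [← hlow]
  exact stdz_filter_mem_blockPerms hw _

theorem glue_mem {y : (_ : List ℕ × List ℕ) × (List ℕ × List ℕ)} (hy : y ∈ splitBlockPerms α) :
    glue y ∈ blockPerms α ×ˢ Finset.range (α.sum + 1) := by
  obtain ⟨⟨β, γ⟩, ⟨u, v⟩⟩ := y
  simp only [splitBlockPerms, Finset.mem_sigma, List.mem_toFinset, Finset.mem_product] at hy
  obtain ⟨hs, hu, hv⟩ := hy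
  obtain ⟨huperm, hincu⟩ := mem_blockPerms.1 hu
  have hsum := sum_add_sum_of_mem_splittings hs
  have hvperm := map_add_perm_range' hv β.sum
  simp only [glue, Finset.mem_product, Finset.mem_range, mem_blockPerms]
  refine ⟨⟨?_, blockIncreasing_blockInterleave hs (by simp [huperm.length_eq])
    (by simp [hvperm.length_eq]) hincu ((blockIncreasing_map_iff (by simp) _).2
      (mem_blockPerms.1 hv).2) fun x hx y hy => ?_⟩, by omega⟩
  · refine (perm_blockInterleave hs (by simp [huperm.length_eq]) (by simp [hvperm.length_eq])).trans
      ((huperm.append hvperm).trans ?_)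
    rw [← hsum, ← List.range'_append, one_mul, add_comm 1]
  · have := List.mem_range'_1.1 (huperm.mem_iff.1 hx)
    have := List.mem_range'_1.1 (hvperm.mem_iff.1 hy)
    omega

theorem glue_cutAt {x : List ℕ × ℕ} (hx : x ∈ blockPerms α ×ˢ Finset.range (α.sum + 1)) :
    glue (cutAt α x) = x := by
  obtain ⟨w, i⟩ := x
  simp only [Finset.mem_product, Finset.mem_range] at hx
  obtain ⟨hw, hi⟩ := hx
  obtain ⟨hperm, hinc⟩ := mem_blockPerms.1 hw
  have hlen := length_of_mem_blockPerms hw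
  have hcut : (blockCounts (· ≤ i) α w).sum = i := by
    rw [sum_blockCounts _ hlen, List.countP_eq_length_filter,
      (filter_le_perm_range' hperm (Nat.lt_succ_iff.1 hi)).length_eq, List.length_range']
  have hhigh := filter_not_le_perm_range' (i := i) hperm
  have hshift : (stdz (w.filter fun b => !decide (b ≤ i))).map (i + ·) =
      w.filter fun b => !decide (b ≤ i) := by
    rw [stdz_of_perm_range' hhigh, List.map_map]
    refine (List.map_congr_left fun x hx => ?_).trans (List.map_id _)
    have := List.mem_range'_1.1 (hhigh.mem_iff.1 hx)
    simp only [Function.comp_apply, id]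
    omega
  simp only [glue, cutAt, hcut, hshift, Prod.mk.injEq, and_true]
  exact blockInterleave_blockCounts (fun x y hxy hy => by simp at hy ⊢; omega) hinc hlen

theorem cutAt_glue {y : (_ : List ℕ × List ℕ) × (List ℕ × List ℕ)} (hy : y ∈ splitBlockPerms α) :
    cutAt α (glue y) = y := by
  obtain ⟨⟨β, γ⟩, ⟨u, v⟩⟩ := y
  simp only [splitBlockPerms, Finset.mem_sigma, List.mem_toFinset, Finset.mem_product] at hy
  obtain ⟨hs, hu, hv⟩ := hy
  have huperm := (mem_blockPerms.1 hu).1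
  have hvperm := map_add_perm_range' hv β.sum
  have hulen : u.length = β.sum := by simp [huperm.length_eq]
  have hvlen : (v.map (β.sum + ·)).length = γ.sum := by simp [hvperm.length_eq]
  have hule : ∀ x ∈ u, decide (x ≤ β.sum) = true := fun x hx => by
    have := List.mem_range'_1.1 (huperm.mem_iff.1 hx)
    simp only [decide_eq_true_eq]
    omega
  have hvgt : ∀ y ∈ v.map (β.sum + ·), decide (y ≤ β.sum) = false := fun y hy => by
    have := List.mem_range'_1.1 (hvperm.mem_iff.1 hy)
    simp only [decide_eq_false_iff_not]
    omega
  obtain ⟨hβ, hγ⟩ := blockCounts_blockInterleave _ hs hulen hvlen hule hvgt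
  have hlow := filter_blockInterleave_of_right _ hs hulen hvlen hvgt
  have hhigh := filter_blockInterleave_of_left (fun b => !decide (b ≤ β.sum)) hs hulen hvlen
    fun x hx => by simp [hule x hx]
  rw [List.filter_eq_self.2 hule] at hlow
  have hstdz : stdz ((blockInterleave β γ u (v.map (β.sum + ·))).filter
      fun b => !decide (b ≤ β.sum)) = v := by
    rw [hhigh, List.filter_eq_self (l := v.map _).2 fun y hy => by simp [hvgt y hy],
      stdz_of_perm_range' hvperm, List.map_map]
    simp [Function.comp_def]
  dsimp only [cutAt, glue]
  rw [hβ, hγ, hlow, hstdz]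

end Comultiplication

theorem comulE_single (w : List ℕ) : comulE (single w 1) = comulMPR' w := by
  rw [comulE, Finsupp.lsum_single, LinearMap.toSpanSingleton_apply, one_smul]

theorem comulE_SImg_eq_sum (α : List ℕ) :
    comulE (SImg α) = ∑ x ∈ blockPerms α ×ˢ Finset.range (α.sum + 1),
      single (cutAt α x).2.1 1 ⊗ₜ[ℤ] single (cutAt α x).2.2 1 := by
  rw [SImg_eq_sum_blockPerms, map_sum, Finset.sum_product]
  refine Finset.sum_congr rfl fun w hw => ?_
  have hgt : ∀ i, (w.filter fun a => i < a) = w.filter fun b => !decide (b ≤ i) := fun i =>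
    List.filter_congr fun b _ => by simp only [← decide_not, not_le]
  rw [comulE_single, comulMPR', ← List.sum_toFinset _ List.nodup_range, List.toFinset_range,
    length_of_mem_blockPerms hw]
  simp only [hgt]
  rfl

theorem sum_splittings_eq_sum (α : List ℕ) :
    ((splittings α).map fun p => SImg p.1 ⊗ₜ[ℤ] SImg p.2).sum =
      ∑ y ∈ splitBlockPerms α, single y.2.1 1 ⊗ₜ[ℤ] single y.2.2 1 := by
  rw [← List.sum_toFinset _ (nodup_splittings α), splitBlockPerms, Finset.sum_sigma]
  refine Finset.sum_congr rfl fun p _ => ?_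
  rw [SImg_eq_sum_blockPerms, SImg_eq_sum_blockPerms, Finset.sum_product, TensorProduct.sum_tmul]
  simp only [TensorProduct.tmul_sum]

theorem comulE_SImg (α : List ℕ) :
    comulE (SImg α) = ((splittings α).map fun p => SImg p.1 ⊗ₜ[ℤ] SImg p.2).sum := by
  rw [comulE_SImg_eq_sum, sum_splittings_eq_sum]
  exact Finset.sum_nbij' (cutAt α) glue (fun _ => cutAt_mem) (fun _ => glue_mem)
    (fun _ => glue_cutAt) (fun _ => cutAt_glue) fun _ _ => rfl

/-- The map `i : NSymm → (MPR, m', μ')` with `Sₙ ↦ [1,2,…,n]` is an injective morphism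
of Hopf algebras: it is multiplicative on monomials `S_α`, it intertwines the
comultiplications (`μ(S_α) = Σ_{β+γ=α} S_β ⊗ S_γ`), and its linear extension on the
basis of compositions (words with positive entries) is injective. -/
theorem stmt10 :
    (∀ α β : List ℕ, SImg (α ++ β) = mulE (SImg α) (SImg β)) ∧
    (∀ α : List ℕ, comulE (SImg α)
        = ((splittings α).map (fun p => SImg p.1 ⊗ₜ[ℤ] SImg p.2)).sum) ∧
    Function.Injective (fun x : {w : List ℕ // ∀ a ∈ w, 0 < a} →₀ ℤ =>
      x.sum fun α c => c • SImg α.val) :=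
  ⟨SImg_append, comulE_SImg, linearIndependent_SImg⟩
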